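/- arXiv:2401.09007 — 2 statements merged into one kernel-verified Lean document; each statement's English description precedes it below -/
import Mathlib

section
/- For parameters θ_k, φ_k ∈ ℝ, define W_k := R_𝔥(θ_k) U* R_𝔨(φ_k) U. Then for every n ≥ 0 there exist polynomials Π_n, Φ_n with complex coefficients such that ∏_{k=1}^n W_k = [[Π_n(A*A), i Φ_n(A*A) A*B],[i Φ̄_n(D*D) B*A, Π̄_n(D*D)]] on 𝔥 ⊕ 𝔥^⊥, where Π_0 ≡ 1, Φ_0 ≡ 0, and the polynomials satisfy the recursion Π_n(x) = P_n(x) Π_{n−1}(x) − Q_n(x) Φ̄_{n−1}(x)(1−x)x and Φ_n(x) = P_n(x) Φ_{n−1}(x) + Q_n(x) Π̄_{n−1}(x), with P_n(x) = e^{iθ_n}(e^{-iφ_n} + 2i sin(φ_n) x) and Q_n(x) = 2 e^{iθ_n} sin(φ_n). -/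
/-!
Write `T = A†A` and `S = D†D`. Reading `U†U = 1` and `UU† = 1` blockwise gives
`AA† + BB† = 1` and `B†B + D†D = 1`, hence `(A†B) S = T (A†B)`, `(B†A) T = S (B†A)`,
`(A†B)(B†A) = T - T²` and `(B†A)(A†B) = S - S²`. Consequently the operator matrices
`[[Π(T), i Φ(T) A†B], [i Φ̄(S) B†A, Π̄(S)]]` are closed under composition, the pairs `(Π, Φ)`
multiplying by the recursion of the theorem. A direct computation shows that `W_k` is such a
matrix with `(Π, Φ) = (P_k, Q_k)`, and the theorem follows by induction on `n`.
-/

open ContinuousLinearMap Submodule Polynomial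

section

variable {𝕜 E F G : Type*} [NontriviallyNormedField 𝕜] [NormedAddCommGroup E] [NormedSpace 𝕜 E]
  [NormedAddCommGroup F] [NormedSpace 𝕜 F] [NormedAddCommGroup G] [NormedSpace 𝕜 G]

lemma ContinuousLinearMap.comp_aeval_of_comp_eq (f : E →L[𝕜] F) {a : E →L[𝕜] E}
    {b : F →L[𝕜] F} (h : f ∘L a = b ∘L f) (p : 𝕜[X]) :
    f ∘L aeval a p = aeval b p ∘L f := by
  induction p using Polynomial.induction_on with
  | C c => ext x; simp
  | add p q hp hq => rw [map_add, map_add, comp_add, add_comp, hp, hq]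
  | monomial n c ih =>
    rw [pow_succ, ← mul_assoc, map_mul (aeval a), map_mul (aeval b), aeval_X, aeval_X, mul_def,
      mul_def, ← comp_assoc, ih, comp_assoc, h, comp_assoc]

lemma ContinuousLinearMap.apply_apply_eq_sub_of_add_eq_one {f : F →L[𝕜] E} {g : E →L[𝕜] F}
    {f' : G →L[𝕜] E} {g' : E →L[𝕜] G} (h : f ∘L g + f' ∘L g' = 1) (z : E) :
    f (g z) = z - f' (g' z) :=
  eq_sub_of_add_eq (by simpa using congr($h z))

end

lemma Polynomial.map_starRingEnd_map_starRingEnd {R : Type*} [CommSemiring R] [StarRing R]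
    (p : R[X]) : (p.map (starRingEnd R)).map (starRingEnd R) = p := by
  ext; simp

namespace ContinuousLinearMap

variable {𝕜 E F G : Type*} [RCLike 𝕜]
  [NormedAddCommGroup E] [InnerProductSpace 𝕜 E] [NormedAddCommGroup F] [InnerProductSpace 𝕜 F]
  [NormedAddCommGroup G] [InnerProductSpace 𝕜 G]

/-- In the theorem, `A`, `B`, `C`, `D` are `U.block 𝔥 𝔨`, `U.block 𝔥ᗮ 𝔨`, `U.block 𝔥 𝔨ᗮ`,
`U.block 𝔥ᗮ 𝔨ᗮ`. -/
noncomputable def block (U : E →L[𝕜] F) (K : Submodule 𝕜 E) (L : Submodule 𝕜 F)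
    [L.HasOrthogonalProjection] : K →L[𝕜] L :=
  L.orthogonalProjectionOnto ∘L U ∘L K.subtypeL

@[simp]
lemma block_apply (U : E →L[𝕜] F) (K : Submodule 𝕜 E) (L : Submodule 𝕜 F)
    [L.HasOrthogonalProjection] (x : K) : U.block K L x = L.orthogonalProjectionOnto (U x) :=
  rfl

lemma coe_block_add_coe_block_orthogonal (U : E →L[𝕜] F) (K : Submodule 𝕜 E)
    (L : Submodule 𝕜 F) [L.HasOrthogonalProjection] (x : K) :
    (U.block K L x : F) + U.block K Lᗮ x = U x :=
  L.starProjection_add_starProjection_orthogonal (U x)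

lemma apply_coe_add_coe (U : E →L[𝕜] F) (K : Submodule 𝕜 E) [K.HasOrthogonalProjection]
    (L : Submodule 𝕜 F) [L.HasOrthogonalProjection] (x : K) (y : Kᗮ) :
    U (x + y) = ((U.block K L x + U.block Kᗮ L y : L) : F) +
      ((U.block K Lᗮ x + U.block Kᗮ Lᗮ y : Lᗮ) : F) := by
  rw [map_add, ← coe_block_add_coe_block_orthogonal U K L,
    ← coe_block_add_coe_block_orthogonal U Kᗮ L]
  push_cast
  abel

lemma block_comp_add_block_comp (V : F →L[𝕜] G) (U : E →L[𝕜] F) (K : Submodule 𝕜 E)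
    (L : Submodule 𝕜 F) [L.HasOrthogonalProjection] (M : Submodule 𝕜 G)
    [M.HasOrthogonalProjection] :
    V.block L M ∘L U.block K L + V.block Lᗮ M ∘L U.block K Lᗮ = (V ∘L U).block K M := by
  ext x
  simp only [add_apply, comp_apply, block_apply, ← map_add]
  exact congrArg (fun v ↦ (M.orthogonalProjectionOnto (V v) : G))
    (coe_block_add_coe_block_orthogonal U K L x)

lemma one_block_self (K : Submodule 𝕜 E) [K.HasOrthogonalProjection] :
    (1 : E →L[𝕜] E).block K K = 1 := by
  ext x; simp

lemma one_block_orthogonal (K : Submodule 𝕜 E) [K.HasOrthogonalProjection] :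
    (1 : E →L[𝕜] E).block K Kᗮ = 0 := by
  ext x; simp

lemma one_block_orthogonal_left (K : Submodule 𝕜 E) [K.HasOrthogonalProjection] :
    (1 : E →L[𝕜] E).block Kᗮ K = 0 := by
  ext x; simp [orthogonalProjectionOnto_apply_of_mem_orthogonal x.2]

lemma adjoint_block [CompleteSpace E] [CompleteSpace F] (U : E →L[𝕜] F) (K : Submodule 𝕜 E)
    [CompleteSpace K] (L : Submodule 𝕜 F) [CompleteSpace L] :
    adjoint (U.block K L) = (adjoint U).block L K := by
  simp only [block, adjoint_comp, adjoint_subtypeL, adjoint_orthogonalProjectionOnto, comp_assoc]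

end ContinuousLinearMap

section

variable {𝕜 E E' F F' : Type*} [RCLike 𝕜]
  [NormedAddCommGroup E] [InnerProductSpace 𝕜 E] [CompleteSpace E]
  [NormedAddCommGroup E'] [InnerProductSpace 𝕜 E'] [CompleteSpace E']
  [NormedAddCommGroup F] [InnerProductSpace 𝕜 F] [CompleteSpace F]
  [NormedAddCommGroup F'] [InnerProductSpace 𝕜 F'] [CompleteSpace F']
  {A : E →L[𝕜] F} {B : E' →L[𝕜] F} {D : E' →L[𝕜] F'}

lemma adjoint_comp_comp_adjoint_comp_eq_sub (hAB : A ∘L adjoint A + B ∘L adjoint B = 1) :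
    (adjoint A ∘L B) ∘L (adjoint B ∘L A) =
      adjoint A ∘L A - (adjoint A ∘L A) ∘L (adjoint A ∘L A) := by
  ext x
  simp [apply_apply_eq_sub_of_add_eq_one ((add_comm _ _).trans hAB)]

lemma adjoint_comp_comp_adjoint_comp_eq_sub' (hAB : A ∘L adjoint A + B ∘L adjoint B = 1)
    (hBD : adjoint B ∘L B + adjoint D ∘L D = 1) :
    (adjoint B ∘L A) ∘L (adjoint A ∘L B) =
      adjoint D ∘L D - (adjoint D ∘L D) ∘L (adjoint D ∘L D) := by
  ext y
  simp [apply_apply_eq_sub_of_add_eq_one hAB, apply_apply_eq_sub_of_add_eq_one hBD]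

lemma adjoint_comp_comp_semiconj (hAB : A ∘L adjoint A + B ∘L adjoint B = 1)
    (hBD : adjoint B ∘L B + adjoint D ∘L D = 1) :
    (adjoint A ∘L B) ∘L (adjoint D ∘L D) = (adjoint A ∘L A) ∘L (adjoint A ∘L B) := by
  ext y
  simp [apply_apply_eq_sub_of_add_eq_one hAB,
    apply_apply_eq_sub_of_add_eq_one ((add_comm _ _).trans hBD)]

lemma adjoint_comp_comp_semiconj' (hAB : A ∘L adjoint A + B ∘L adjoint B = 1)
    (hBD : adjoint B ∘L B + adjoint D ∘L D = 1) :
    (adjoint B ∘L A) ∘L (adjoint A ∘L A) = (adjoint D ∘L D) ∘L (adjoint B ∘L A) := by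
  ext x
  simp [apply_apply_eq_sub_of_add_eq_one hAB,
    apply_apply_eq_sub_of_add_eq_one ((add_comm _ _).trans hBD)]

end

section Symbol

open Complex

variable {E E' F F' : Type*}
  [NormedAddCommGroup E] [InnerProductSpace ℂ E] [CompleteSpace E]
  [NormedAddCommGroup E'] [InnerProductSpace ℂ E'] [CompleteSpace E']
  [NormedAddCommGroup F] [InnerProductSpace ℂ F] [CompleteSpace F]
  [NormedAddCommGroup F'] [InnerProductSpace ℂ F'] [CompleteSpace F']

/-- The operator matrix `[[Π(A†A), i Φ(A†A) A†B], [i Φ̄(D†D) B†A, Π̄(D†D)]]` on `E × E'`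
of the symbol `a = (Π, Φ)`. -/
noncomputable def symbolAct (A : E →L[ℂ] F) (B : E' →L[ℂ] F) (D : E' →L[ℂ] F')
    (a : ℂ[X] × ℂ[X]) (v : E × E') : E × E' :=
  (aeval (adjoint A ∘L A) a.1 v.1 + (I • (aeval (adjoint A ∘L A) a.2 ∘L (adjoint A ∘L B))) v.2,
    (I • (aeval (adjoint D ∘L D) (a.2.map (starRingEnd ℂ)) ∘L (adjoint B ∘L A))) v.1 +
      aeval (adjoint D ∘L D) (a.1.map (starRingEnd ℂ)) v.2)

noncomputable def symbolMul (a b : ℂ[X] × ℂ[X]) : ℂ[X] × ℂ[X] :=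
  (a.1 * b.1 - a.2 * b.2.map (starRingEnd ℂ) * (1 - X) * X,
    a.1 * b.2 + a.2 * b.1.map (starRingEnd ℂ))

noncomputable def symbolProd (s : ℕ → ℂ[X] × ℂ[X]) : ℕ → ℂ[X] × ℂ[X]
  | 0 => (1, 0)
  | n + 1 => symbolMul (s (n + 1)) (symbolProd s n)

@[simp]
lemma symbolAct_one_zero (A : E →L[ℂ] F) (B : E' →L[ℂ] F) (D : E' →L[ℂ] F') (v : E × E') :
    symbolAct A B D (1, 0) v = v := by
  simp [symbolAct]

lemma symbolAct_symbolAct {A : E →L[ℂ] F} {B : E' →L[ℂ] F} {D : E' →L[ℂ] F'}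
    (hAB : A ∘L adjoint A + B ∘L adjoint B = 1) (hBD : adjoint B ∘L B + adjoint D ∘L D = 1)
    (a b : ℂ[X] × ℂ[X]) (v : E × E') :
    symbolAct A B D a (symbolAct A B D b v) = symbolAct A B D (symbolMul a b) v := by
  have hsemiconj (p : ℂ[X]) (y : E') :
      adjoint A (B (aeval (adjoint D ∘L D) p y)) = aeval (adjoint A ∘L A) p (adjoint A (B y)) :=
    congr($((adjoint A ∘L B).comp_aeval_of_comp_eq (adjoint_comp_comp_semiconj hAB hBD) p) y)
  have hsemiconj' (p : ℂ[X]) (x : E) :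
      adjoint B (A (aeval (adjoint A ∘L A) p x)) = aeval (adjoint D ∘L D) p (adjoint B (A x)) :=
    congr($((adjoint B ∘L A).comp_aeval_of_comp_eq (adjoint_comp_comp_semiconj' hAB hBD) p) x)
  have hprod (x : E) :
      adjoint A (B (adjoint B (A x))) = adjoint A (A x) - adjoint A (A (adjoint A (A x))) :=
    congr($(adjoint_comp_comp_adjoint_comp_eq_sub hAB) x)
  have hprod' (y : E') :
      adjoint B (A (adjoint A (B y))) = adjoint D (D y) - adjoint D (D (adjoint D (D y))) :=
    congr($(adjoint_comp_comp_adjoint_comp_eq_sub' hAB hBD) y)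
  obtain ⟨x, y⟩ := v
  ext
  · simp only [symbolAct, symbolMul, comp_apply, smul_apply, map_add, map_sub, map_mul, map_smul,
      map_one, mul_apply_eq_comp, add_apply, sub_apply, one_apply_eq_self, aeval_X, smul_smul,
      I_mul_I, hsemiconj, hprod]
    module
  · simp only [symbolAct, symbolMul, comp_apply, smul_apply, Polynomial.map_add,
      Polynomial.map_sub, Polynomial.map_mul, Polynomial.map_one, Polynomial.map_X,
      map_starRingEnd_map_starRingEnd, map_add, map_sub, map_mul, map_smul, map_one,
      mul_apply_eq_comp, add_apply, sub_apply, one_apply_eq_self, aeval_X, smul_smul, I_mul_I,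
      hsemiconj', hprod']
    module

end Symbol

section Phase

open Complex

variable {E F : Type*}
  [NormedAddCommGroup E] [InnerProductSpace ℂ E] [NormedAddCommGroup F] [InnerProductSpace ℂ F]

lemma Complex.exp_ofReal_mul_I_eq_exp_neg_add (r : ℝ) :
    exp (r * I) = exp (-r * I) + 2 * I * Real.sin r := by
  simp only [exp_mul_I, ofReal_sin, cos_neg, sin_neg]
  ring

lemma Complex.conj_exp_ofReal_mul_I (r : ℝ) : starRingEnd ℂ (exp (r * I)) = exp (-r * I) := by
  rw [← exp_conj, map_mul, conj_ofReal, conj_I, mul_neg, neg_mul]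

lemma Complex.conj_exp_neg_ofReal_mul_I (r : ℝ) :
    starRingEnd ℂ (exp (-r * I)) = exp (r * I) := by
  rw [← exp_conj, map_mul, map_neg, conj_ofReal, conj_I, neg_mul_neg]

noncomputable def Submodule.projectorRotation (K : Submodule ℂ E) [K.HasOrthogonalProjection]
    (θ : ℝ) : E →L[ℂ] E :=
  exp (θ * I) • (K.subtypeL ∘L K.orthogonalProjectionOnto) +
    exp (-θ * I) • (1 - K.subtypeL ∘L K.orthogonalProjectionOnto)

lemma Submodule.projectorRotation_apply_coe_add_coe (K : Submodule ℂ E)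
    [K.HasOrthogonalProjection] (θ : ℝ) (x : K) (y : Kᗮ) :
    K.projectorRotation θ (x + y) =
      ((exp (θ * I) • x : K) : E) + ((exp (-θ * I) • y : Kᗮ) : E) := by
  simp [projectorRotation, orthogonalProjectionOnto_apply_of_mem_orthogonal y.2]

noncomputable def phaseSymbol (θ φ : ℝ) : ℂ[X] × ℂ[X] :=
  (C (exp (θ * I) * exp (-φ * I)) + C (exp (θ * I) * (2 * I * Real.sin φ)) * X,
    C (2 * exp (θ * I) * Real.sin φ))

lemma projectorRotation_comp_adjoint_comp_projectorRotation_comp_apply [CompleteSpace E]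
    [CompleteSpace F] {U : E →L[ℂ] F} (hU : adjoint U ∘L U = 1) (K : Submodule ℂ E)
    [CompleteSpace K] (L : Submodule ℂ F) [CompleteSpace L] (θ φ : ℝ) (x : K) (y : Kᗮ) :
    (K.projectorRotation θ ∘L adjoint U ∘L L.projectorRotation φ ∘L U) (x + y) =
      ((symbolAct (U.block K L) (U.block Kᗮ L) (U.block Kᗮ Lᗮ) (phaseSymbol θ φ) (x, y)).1 : E) +
        (symbolAct (U.block K L) (U.block Kᗮ L) (U.block Kᗮ Lᗮ) (phaseSymbol θ φ) (x, y)).2 := by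
  have hblock (K₁ K₂ : Submodule ℂ E) [CompleteSpace K₁] [CompleteSpace K₂] (z : K₁) :
      (adjoint U).block L K₂ (U.block K₁ L z) + (adjoint U).block Lᗮ K₂ (U.block K₁ Lᗮ z) =
        (1 : E →L[ℂ] E).block K₁ K₂ z := by
    simpa [hU] using congr($(block_comp_add_block_comp (adjoint U) U K₁ L K₂) z)
  -- `C†C = 1 - A†A`, `C†D = -A†B`, `D†C = -B†A` and `B†B = 1 - D†D`
  have hCC (z : K) :
      (adjoint U).block Lᗮ K (U.block K Lᗮ z) = z - (adjoint U).block L K (U.block K L z) :=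
    eq_sub_of_add_eq' (by simpa [one_block_self] using hblock K K z)
  have hCD (z : Kᗮ) :
      (adjoint U).block Lᗮ K (U.block Kᗮ Lᗮ z) = -(adjoint U).block L K (U.block Kᗮ L z) :=
    eq_neg_of_add_eq_zero_right (by simpa [one_block_orthogonal_left] using hblock Kᗮ K z)
  have hDC (z : K) :
      (adjoint U).block Lᗮ Kᗮ (U.block K Lᗮ z) = -(adjoint U).block L Kᗮ (U.block K L z) :=
    eq_neg_of_add_eq_zero_right (by simpa [one_block_orthogonal] using hblock K Kᗮ z)
  have hBB (z : Kᗮ) :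
      (adjoint U).block L Kᗮ (U.block Kᗮ L z) = z - (adjoint U).block Lᗮ Kᗮ (U.block Kᗮ Lᗮ z) :=
    eq_sub_of_add_eq (by simpa [one_block_self] using hblock Kᗮ Kᗮ z)
  simp only [comp_apply]
  rw [apply_coe_add_coe U K L, projectorRotation_apply_coe_add_coe,
    apply_coe_add_coe (adjoint U) L K, projectorRotation_apply_coe_add_coe]
  refine congrArg₂ (fun (a : K) (b : Kᗮ) ↦ (a : E) + b) ?_ ?_
  · simp only [symbolAct, phaseSymbol, adjoint_block, map_add, map_smul, aeval_mul, aeval_C,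
      aeval_X, Algebra.algebraMap_eq_smul_one, add_apply, comp_apply, smul_apply,
      one_apply_eq_self, mul_apply_eq_comp, hCC, hCD]
    rw [exp_ofReal_mul_I_eq_exp_neg_add φ]
    module
  · simp only [symbolAct, phaseSymbol, adjoint_block, Polynomial.map_add, Polynomial.map_mul,
      Polynomial.map_C, Polynomial.map_X, map_add, map_smul, aeval_mul, aeval_C, aeval_X,
      Algebra.algebraMap_eq_smul_one, add_apply, comp_apply, smul_apply, one_apply_eq_self,
      mul_apply_eq_comp, map_mul (starRingEnd ℂ), map_ofNat, conj_ofReal, conj_I,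
      conj_exp_ofReal_mul_I, conj_exp_neg_ofReal_mul_I, hDC, hBB]
    rw [exp_ofReal_mul_I_eq_exp_neg_add φ]
    module

end Phase

open ContinuousLinearMap Complex Submodule Polynomial in
theorem stmt6_general
    {H : Type*} [NormedAddCommGroup H] [InnerProductSpace ℂ H] [CompleteSpace H]
    (𝔥 𝔨 : Submodule ℂ H) [CompleteSpace 𝔥] [CompleteSpace 𝔨]
    (U : H →L[ℂ] H) (hU1 : adjoint U ∘L U = 1) (hU2 : U ∘L adjoint U = 1)
    (A : 𝔥 →L[ℂ] 𝔨) (B : 𝔥ᗮ →L[ℂ] 𝔨) (D : 𝔥ᗮ →L[ℂ] 𝔨ᗮ)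
    (hA : ∀ x : 𝔥, A x = orthogonalProjection 𝔨 (U x))
    (hB : ∀ y : 𝔥ᗮ, B y = orthogonalProjection 𝔨 (U y))
    (hD : ∀ y : 𝔥ᗮ, D y = orthogonalProjection 𝔨ᗮ (U y))
    (θ φ : ℕ → ℝ) (W Wn : ℕ → (H →L[ℂ] H))
    (hWdef : ∀ k, W k = (Complex.exp (θ k * Complex.I) • (𝔥.subtypeL ∘L orthogonalProjection 𝔥) +
          Complex.exp (-θ k * Complex.I) • (1 - 𝔥.subtypeL ∘L orthogonalProjection 𝔥)) ∘L
        (adjoint U ∘L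
          ((Complex.exp (φ k * Complex.I) • (𝔨.subtypeL ∘L orthogonalProjection 𝔨) +
            Complex.exp (-φ k * Complex.I) • (1 - 𝔨.subtypeL ∘L orthogonalProjection 𝔨)) ∘L U)))
    (hWn0 : Wn 0 = 1) (hWnS : ∀ n, Wn (n + 1) = W (n + 1) ∘L Wn n)
    (Pp Qp : ℕ → Polynomial ℂ)
    (hPp : ∀ n, Pp n = Polynomial.C (Complex.exp (θ n * Complex.I) * Complex.exp (-φ n * Complex.I)) +
      Polynomial.C (Complex.exp (θ n * Complex.I) * (2 * Complex.I * Real.sin (φ n))) * Polynomial.X)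
    (hQp : ∀ n, Qp n = Polynomial.C (2 * Complex.exp (θ n * Complex.I) * Real.sin (φ n))) :
    ∃ Pi' Φ' : ℕ → Polynomial ℂ,
      Pi' 0 = 1 ∧ Φ' 0 = 0 ∧
      (∀ n : ℕ, 1 ≤ n → Pi' n = Pp n * Pi' (n - 1) -
        Qp n * (Φ' (n - 1)).map (starRingEnd ℂ) * (1 - Polynomial.X) * Polynomial.X) ∧
      (∀ n : ℕ, 1 ≤ n → Φ' n = Pp n * Φ' (n - 1) +
        Qp n * (Pi' (n - 1)).map (starRingEnd ℂ)) ∧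
      (∀ n : ℕ, ∀ x : 𝔥, ∀ y : 𝔥ᗮ,
      Wn n ((x : H) + (y : H)) =
        ((Polynomial.aeval (adjoint A ∘L A) (Pi' n) x +
          (Complex.I • (Polynomial.aeval (adjoint A ∘L A) (Φ' n) ∘L (adjoint A ∘L B))) y : 𝔥) : H) +
        (((Complex.I • (Polynomial.aeval (adjoint D ∘L D) ((Φ' n).map (starRingEnd ℂ)) ∘L
            (adjoint B ∘L A))) x +
          Polynomial.aeval (adjoint D ∘L D) ((Pi' n).map (starRingEnd ℂ)) y : 𝔥ᗮ) : H)) := by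
  obtain rfl : A = U.block 𝔥 𝔨 := ContinuousLinearMap.ext hA
  obtain rfl : B = U.block 𝔥ᗮ 𝔨 := ContinuousLinearMap.ext hB
  obtain rfl : D = U.block 𝔥ᗮ 𝔨ᗮ := ContinuousLinearMap.ext hD
  have hAB : U.block 𝔥 𝔨 ∘L adjoint (U.block 𝔥 𝔨) + U.block 𝔥ᗮ 𝔨 ∘L adjoint (U.block 𝔥ᗮ 𝔨) = 1 := by
    rw [adjoint_block, adjoint_block, block_comp_add_block_comp, hU2, one_block_self]
  have hBD : adjoint (U.block 𝔥ᗮ 𝔨) ∘L U.block 𝔥ᗮ 𝔨 +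
      adjoint (U.block 𝔥ᗮ 𝔨ᗮ) ∘L U.block 𝔥ᗮ 𝔨ᗮ = 1 := by
    rw [adjoint_block, adjoint_block, block_comp_add_block_comp, hU1, one_block_self]
  set act := symbolAct (U.block 𝔥 𝔨) (U.block 𝔥ᗮ 𝔨) (U.block 𝔥ᗮ 𝔨ᗮ)
  have hstep (k : ℕ) (v : 𝔥 × 𝔥ᗮ) :
      W k (v.1 + v.2) = ((act (Pp k, Qp k) v).1 : H) + (act (Pp k, Qp k) v).2 := by
    have hsymbol : (Pp k, Qp k) = phaseSymbol (θ k) (φ k) := by rw [hPp, hQp]; rfl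
    rw [hWdef, hsymbol]
    exact projectorRotation_comp_adjoint_comp_projectorRotation_comp_apply hU1 𝔥 𝔨 _ _ v.1 v.2
  set s := symbolProd fun k ↦ (Pp k, Qp k)
  suffices ∀ n (x : 𝔥) (y : 𝔥ᗮ), Wn n (x + y) = ((act (s n) (x, y)).1 : H) + (act (s n) (x, y)).2
    from ⟨fun n ↦ (s n).1, fun n ↦ (s n).2, rfl, rfl, by rintro (_ | n) hn <;> trivial,
      by rintro (_ | n) hn <;> trivial, this⟩
  intro n
  induction n with
  | zero => simp [hWn0, s, symbolProd, act]
  | succ n ih =>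
    intro x y
    rw [hWnS, comp_apply, ih, hstep]
    exact congrArg (fun v ↦ (v.1 : H) + v.2) (symbolAct_symbolAct hAB hBD _ _ _)

open ContinuousLinearMap Complex Submodule Polynomial in
theorem stmt6
    {H : Type*} [NormedAddCommGroup H] [InnerProductSpace ℂ H] [CompleteSpace H]
    (𝔥 𝔨 : Submodule ℂ H) [CompleteSpace 𝔥] [CompleteSpace 𝔨]
    (U : H →L[ℂ] H) (hU1 : adjoint U ∘L U = 1) (hU2 : U ∘L adjoint U = 1)
    (A : 𝔥 →L[ℂ] 𝔨) (B : 𝔥ᗮ →L[ℂ] 𝔨) (C : 𝔥 →L[ℂ] 𝔨ᗮ) (D : 𝔥ᗮ →L[ℂ] 𝔨ᗮ)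
    (hA : ∀ x : 𝔥, A x = orthogonalProjection 𝔨 (U x))
    (hB : ∀ y : 𝔥ᗮ, B y = orthogonalProjection 𝔨 (U y))
    (hC : ∀ x : 𝔥, C x = orthogonalProjection 𝔨ᗮ (U x))
    (hD : ∀ y : 𝔥ᗮ, D y = orthogonalProjection 𝔨ᗮ (U y))
    (θ φ : ℕ → ℝ) (W Wn : ℕ → (H →L[ℂ] H))
    (hWdef : ∀ k, W k = (Complex.exp (θ k * Complex.I) • (𝔥.subtypeL ∘L orthogonalProjection 𝔥) +
          Complex.exp (-θ k * Complex.I) • (1 - 𝔥.subtypeL ∘L orthogonalProjection 𝔥)) ∘L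
        (adjoint U ∘L
          ((Complex.exp (φ k * Complex.I) • (𝔨.subtypeL ∘L orthogonalProjection 𝔨) +
            Complex.exp (-φ k * Complex.I) • (1 - 𝔨.subtypeL ∘L orthogonalProjection 𝔨)) ∘L U)))
    (hWn0 : Wn 0 = 1) (hWnS : ∀ n, Wn (n + 1) = W (n + 1) ∘L Wn n)
    (Pp Qp : ℕ → Polynomial ℂ)
    (hPp : ∀ n, Pp n = Polynomial.C (Complex.exp (θ n * Complex.I) * Complex.exp (-φ n * Complex.I)) +
      Polynomial.C (Complex.exp (θ n * Complex.I) * (2 * Complex.I * Real.sin (φ n))) * Polynomial.X)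
    (hQp : ∀ n, Qp n = Polynomial.C (2 * Complex.exp (θ n * Complex.I) * Real.sin (φ n))) :
    ∃ Pi' Φ' : ℕ → Polynomial ℂ,
      Pi' 0 = 1 ∧ Φ' 0 = 0 ∧
      (∀ n : ℕ, 1 ≤ n → Pi' n = Pp n * Pi' (n - 1) -
        Qp n * (Φ' (n - 1)).map (starRingEnd ℂ) * (1 - Polynomial.X) * Polynomial.X) ∧
      (∀ n : ℕ, 1 ≤ n → Φ' n = Pp n * Φ' (n - 1) +
        Qp n * (Pi' (n - 1)).map (starRingEnd ℂ)) ∧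
      (∀ n : ℕ, ∀ x : 𝔥, ∀ y : 𝔥ᗮ,
      Wn n ((x : H) + (y : H)) =
        ((Polynomial.aeval (adjoint A ∘L A) (Pi' n) x +
          (Complex.I • (Polynomial.aeval (adjoint A ∘L A) (Φ' n) ∘L (adjoint A ∘L B))) y : 𝔥) : H) +
        (((Complex.I • (Polynomial.aeval (adjoint D ∘L D) ((Φ' n).map (starRingEnd ℂ)) ∘L
            (adjoint B ∘L A))) x +
          Polynomial.aeval (adjoint D ∘L D) ((Pi' n).map (starRingEnd ℂ)) y : 𝔥ᗮ) : H)) :=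
  stmt6_general 𝔥 𝔨 U hU1 hU2 A B D hA hB hD θ φ W Wn hWdef hWn0 hWnS Pp Qp hPp hQp
end

section
/- Define ℒ := { A*f ⊕ B*g : f, g ∈ 𝔨 }. Then the QSVT operator W := R_𝔥(θ) U* R_𝔨(φ) U maps ℒ into ℒ, and maps ℒ^⊥ = (ker A) ⊕ (ker B) into itself; more precisely, for Φ₁ ∈ ker A and Φ₂ ∈ ker B, W(Φ₁ ⊕ Φ₂) = e^{i(θ−φ)}Φ₁ ⊕ e^{−i(θ+φ)}Φ₂. -/
/-!
Writing `P` for the projection onto `𝔨`, the middle factor is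
`U* R_𝔨(φ) U = e^{-iφ} + (e^{iφ} - e^{-iφ}) U* P U`, and on `𝔨` the adjoint `U*` splits as
`A* ⊕ B*` along `H = 𝔥 ⊕ 𝔥ᗮ`. Hence `U* R_𝔨(φ) U` maps `ℒ` into `ℒ`, and it acts as the scalar
`e^{-iφ}` on vectors `v` with `P U v = 0`, such as `Φ₁ + Φ₂`. Finally `R_𝔥(θ)` acts on
`A* f ∈ 𝔥` and `B* g ∈ 𝔥ᗮ` by the scalars `e^{iθ}` and `e^{-iθ}`.
-/

open ContinuousLinearMap Complex Submodule

section Compression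

variable {𝕜 E F : Type*} [RCLike 𝕜]
  [NormedAddCommGroup E] [InnerProductSpace 𝕜 E] [CompleteSpace E]
  [NormedAddCommGroup F] [InnerProductSpace 𝕜 F] [CompleteSpace F]
  {L : Submodule 𝕜 F} [CompleteSpace L] {T : E →L[𝕜] F}

theorem adjoint_orthogonalProjectionOnto_comp_comp_subtypeL (K : Submodule 𝕜 E) [CompleteSpace K] :
    adjoint (L.orthogonalProjectionOnto ∘L T ∘L K.subtypeL) =
      K.orthogonalProjectionOnto ∘L adjoint T ∘L L.subtypeL := by
  rw [adjoint_comp, adjoint_comp, adjoint_subtypeL, adjoint_orthogonalProjectionOnto, comp_assoc]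

theorem coe_adjoint_apply_of_apply_eq_orthogonalProjectionOnto {K : Submodule 𝕜 E}
    [CompleteSpace K] {A : K →L[𝕜] L} (hA : ∀ x : K, A x = L.orthogonalProjectionOnto (T x))
    (y : L) : (adjoint A y : E) = K.starProjection (adjoint T y) := by
  obtain rfl : A = L.orthogonalProjectionOnto ∘L T ∘L K.subtypeL := ext hA
  rw [adjoint_orthogonalProjectionOnto_comp_comp_subtypeL]
  rfl

theorem coe_adjoint_add_coe_adjoint_of_blocks (K : Submodule 𝕜 E) [CompleteSpace K]
    {A : K →L[𝕜] L} {B : Kᗮ →L[𝕜] L}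
    (hA : ∀ x : K, A x = L.orthogonalProjectionOnto (T x))
    (hB : ∀ y : Kᗮ, B y = L.orthogonalProjectionOnto (T y)) (z : L) :
    (adjoint A z : E) + (adjoint B z : E) = adjoint T z := by
  rw [coe_adjoint_apply_of_apply_eq_orthogonalProjectionOnto hA,
    coe_adjoint_apply_of_apply_eq_orthogonalProjectionOnto hB, starProjection_orthogonal_val,
    add_sub_cancel]

end Compression

section PhaseRotation

variable {H : Type*} [NormedAddCommGroup H] [InnerProductSpace ℂ H]
  (K : Submodule ℂ H) [K.HasOrthogonalProjection] (θ : ℝ)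

noncomputable def phaseRotation : H →L[ℂ] H :=
  exp (θ * I) • K.starProjection + exp (-θ * I) • (1 - K.starProjection)

theorem phaseRotation_apply (x : H) :
    phaseRotation K θ x =
      exp (-θ * I) • x + (exp (θ * I) - exp (-θ * I)) • K.starProjection x := by
  simp only [phaseRotation, add_apply, smul_apply, sub_apply, one_apply_eq_self]
  module

variable {K} in
theorem phaseRotation_add_apply {x y : H} (hx : x ∈ K) (hy : y ∈ Kᗮ) :
    phaseRotation K θ (x + y) = exp (θ * I) • x + exp (-θ * I) • y := by
  rw [phaseRotation_apply, map_add, starProjection_eq_self_iff.mpr hx,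
    (starProjection_apply_eq_zero_iff K).mpr hy]
  module

theorem adjoint_phaseRotation_apply [CompleteSpace H] {U : H →L[ℂ] H}
    (hU : adjoint U ∘L U = 1) (v : H) :
    adjoint U (phaseRotation K θ (U v)) =
      exp (-θ * I) • v + (exp (θ * I) - exp (-θ * I)) • adjoint U (K.starProjection (U v)) := by
  rw [phaseRotation_apply, map_add, map_smul, map_smul, ← comp_apply (adjoint U), hU,
    one_apply_eq_self]

end PhaseRotation

section QSVT

variable {H : Type*} [NormedAddCommGroup H] [InnerProductSpace ℂ H] [CompleteSpace H]
  {𝔥 𝔨 : Submodule ℂ H} [CompleteSpace 𝔥] [CompleteSpace 𝔨] {U : H →L[ℂ] H}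
  {A : 𝔥 →L[ℂ] 𝔨} {B : 𝔥ᗮ →L[ℂ] 𝔨}
  (hU : adjoint U ∘L U = 1)
  (hA : ∀ x : 𝔥, A x = 𝔨.orthogonalProjectionOnto (U x))
  (hB : ∀ y : 𝔥ᗮ, B y = 𝔨.orthogonalProjectionOnto (U y)) (θ φ : ℝ)

variable (𝔥 𝔨 U) in
noncomputable def qsvtIterate : H →L[ℂ] H :=
  phaseRotation 𝔥 θ ∘L adjoint U ∘L phaseRotation 𝔨 φ ∘L U

include hU hA hB in
theorem qsvtIterate_apply_adjoint_add_adjoint (f g : 𝔨) :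
    let c := exp (φ * I) - exp (-φ * I)
    let k := 𝔨.orthogonalProjectionOnto (U ((adjoint A f : H) + adjoint B g))
    qsvtIterate 𝔥 𝔨 U θ φ ((adjoint A f : H) + adjoint B g) =
      (adjoint A (exp (θ * I) • (exp (-φ * I) • f + c • k)) : H) +
        adjoint B (exp (-θ * I) • (exp (-φ * I) • g + c • k)) := by
  intro c k
  have hmiddle : adjoint U (phaseRotation 𝔨 φ (U ((adjoint A f : H) + adjoint B g))) =
      exp (-φ * I) • ((adjoint A f : H) + adjoint B g) + c • ((adjoint A k : H) + adjoint B k) := by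
    rw [adjoint_phaseRotation_apply _ _ hU, starProjection_apply,
      coe_adjoint_add_coe_adjoint_of_blocks 𝔥 hA hB]
  have hregroup : exp (-φ * I) • ((adjoint A f : H) + adjoint B g) +
      c • ((adjoint A k : H) + adjoint B k) =
        (adjoint A (exp (-φ * I) • f + c • k) : H) + adjoint B (exp (-φ * I) • g + c • k) := by
    simp only [map_add, map_smul, Submodule.coe_add, Submodule.coe_smul]
    module
  rw [qsvtIterate, comp_apply, comp_apply, comp_apply, hmiddle, hregroup,
    phaseRotation_add_apply _ (coe_mem _) (coe_mem _), map_smul, map_smul, Submodule.coe_smul,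
    Submodule.coe_smul]

include hU hA hB in
theorem qsvtIterate_apply_of_mem_ker {Φ₁ : 𝔥} (hΦ₁ : A Φ₁ = 0) {Φ₂ : 𝔥ᗮ} (hΦ₂ : B Φ₂ = 0) :
    qsvtIterate 𝔥 𝔨 U θ φ ((Φ₁ : H) + Φ₂) =
      exp ((θ - φ) * I) • (Φ₁ : H) + exp (-(θ + φ) * I) • (Φ₂ : H) := by
  have hker : 𝔨.starProjection (U ((Φ₁ : H) + Φ₂)) = 0 := by
    rw [starProjection_apply, map_add, map_add, ← hA, ← hB, hΦ₁, hΦ₂, add_zero, coe_zero]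
  rw [qsvtIterate, comp_apply, comp_apply, comp_apply, adjoint_phaseRotation_apply _ _ hU, hker,
    map_zero, smul_zero, add_zero, smul_add,
    phaseRotation_add_apply _ (smul_mem _ _ (coe_mem _)) (smul_mem _ _ (coe_mem _)),
    smul_smul, smul_smul, ← exp_add, ← exp_add]
  congr 3 <;> ring

end QSVT

open ContinuousLinearMap Complex Submodule Polynomial in
theorem stmt14_general
    {H : Type*} [NormedAddCommGroup H] [InnerProductSpace ℂ H] [CompleteSpace H]
    (𝔥 𝔨 : Submodule ℂ H) [CompleteSpace 𝔥] [CompleteSpace 𝔨]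
    (U : H →L[ℂ] H) (hU1 : adjoint U ∘L U = 1)
    (A : 𝔥 →L[ℂ] 𝔨) (B : 𝔥ᗮ →L[ℂ] 𝔨)
    (hA : ∀ x : 𝔥, A x = orthogonalProjection 𝔨 (U x))
    (hB : ∀ y : 𝔥ᗮ, B y = orthogonalProjection 𝔨 (U y))
    (θ φ : ℝ) (W : H →L[ℂ] H)
    (hW : W = (Complex.exp (θ * Complex.I) • (𝔥.subtypeL ∘L orthogonalProjection 𝔥) +
          Complex.exp (-θ * Complex.I) • (1 - 𝔥.subtypeL ∘L orthogonalProjection 𝔥)) ∘L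
        (adjoint U ∘L
          ((Complex.exp (φ * Complex.I) • (𝔨.subtypeL ∘L orthogonalProjection 𝔨) +
            Complex.exp (-φ * Complex.I) • (1 - 𝔨.subtypeL ∘L orthogonalProjection 𝔨)) ∘L U))) :
    (∀ f g : 𝔨, ∃ f' g' : 𝔨,
      W ((adjoint A f : H) + (adjoint B g : H)) = (adjoint A f' : H) + (adjoint B g' : H)) ∧
    (∀ Φ₁ : 𝔥, A Φ₁ = 0 → ∀ Φ₂ : 𝔥ᗮ, B Φ₂ = 0 →
      W ((Φ₁ : H) + (Φ₂ : H)) =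
        Complex.exp ((θ - φ) * Complex.I) • (Φ₁ : H) +
          Complex.exp (-(θ + φ) * Complex.I) • (Φ₂ : H)) := by
  subst hW
  exact ⟨fun f g => ⟨_, _, qsvtIterate_apply_adjoint_add_adjoint hU1 hA hB θ φ f g⟩,
    fun Φ₁ hΦ₁ Φ₂ hΦ₂ => qsvtIterate_apply_of_mem_ker hU1 hA hB θ φ hΦ₁ hΦ₂⟩

open ContinuousLinearMap Complex Submodule Polynomial in
theorem stmt14
    {H : Type*} [NormedAddCommGroup H] [InnerProductSpace ℂ H] [CompleteSpace H]
    (𝔥 𝔨 : Submodule ℂ H) [CompleteSpace 𝔥] [CompleteSpace 𝔨]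
    (U : H →L[ℂ] H) (hU1 : adjoint U ∘L U = 1) (hU2 : U ∘L adjoint U = 1)
    (A : 𝔥 →L[ℂ] 𝔨) (B : 𝔥ᗮ →L[ℂ] 𝔨) (C : 𝔥 →L[ℂ] 𝔨ᗮ) (D : 𝔥ᗮ →L[ℂ] 𝔨ᗮ)
    (hA : ∀ x : 𝔥, A x = orthogonalProjection 𝔨 (U x))
    (hB : ∀ y : 𝔥ᗮ, B y = orthogonalProjection 𝔨 (U y))
    (hC : ∀ x : 𝔥, C x = orthogonalProjection 𝔨ᗮ (U x))
    (hD : ∀ y : 𝔥ᗮ, D y = orthogonalProjection 𝔨ᗮ (U y))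
    (θ φ : ℝ) (W : H →L[ℂ] H)
    (hW : W = (Complex.exp (θ * Complex.I) • (𝔥.subtypeL ∘L orthogonalProjection 𝔥) +
          Complex.exp (-θ * Complex.I) • (1 - 𝔥.subtypeL ∘L orthogonalProjection 𝔥)) ∘L
        (adjoint U ∘L
          ((Complex.exp (φ * Complex.I) • (𝔨.subtypeL ∘L orthogonalProjection 𝔨) +
            Complex.exp (-φ * Complex.I) • (1 - 𝔨.subtypeL ∘L orthogonalProjection 𝔨)) ∘L U))) :
    (∀ f g : 𝔨, ∃ f' g' : 𝔨,
      W ((adjoint A f : H) + (adjoint B g : H)) = (adjoint A f' : H) + (adjoint B g' : H)) ∧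
    (∀ Φ₁ : 𝔥, A Φ₁ = 0 → ∀ Φ₂ : 𝔥ᗮ, B Φ₂ = 0 →
      W ((Φ₁ : H) + (Φ₂ : H)) =
        Complex.exp ((θ - φ) * Complex.I) • (Φ₁ : H) +
          Complex.exp (-(θ + φ) * Complex.I) • (Φ₂ : H)) :=
  stmt14_general 𝔥 𝔨 U hU1 A B hA hB θ φ W hW
end
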